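/- The eigenvalues of the (n+m)×(n+m) blossom matrix A are exactly cos(2πk/(2n+m+1)) for k = 1,…, n+⌊m/2⌋ together with cos(π(2k−1)/(m+1)) for k = 1,…, ⌈m/2⌉. -/
import Mathlib
open Real
set_option maxHeartbeats 1000000

private def cheb (x : ℝ) : ℕ → ℝ
  | 0 => 1
  | 1 => 2 * x
  | (k+2) => 2 * x * cheb x (k+1) - cheb x k

lemma cheb_rec (x : ℝ) (k : ℕ) : cheb x (k+2) = 2*x*cheb x (k+1) - cheb x k := rfl

lemma cheb_mul_sin (θ : ℝ) (k : ℕ) :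
    cheb (Real.cos θ) k * Real.sin θ = Real.sin ((k+1 : ℕ) * θ) := by
  induction k using Nat.twoStepInduction with
  | zero => simp [cheb]
  | one =>
    have : ((1+1 : ℕ) : ℝ) * θ = 2*θ := by push_cast; ring
    rw [this, Real.sin_two_mul]; simp [cheb]; ring
  | more k ih1 ih2 =>
    have hA : ((k+2+1 : ℕ):ℝ)*θ = ((k:ℝ)+2)*θ + θ := by push_cast; ring
    have hB : ((k+1+1 : ℕ):ℝ)*θ = ((k:ℝ)+2)*θ := by push_cast; ring
    have hC : ((k+1 : ℕ):ℝ)*θ = ((k:ℝ)+2)*θ - θ := by push_cast; ring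
    rw [cheb_rec, hA, Real.sin_add]
    rw [hB] at ih2
    rw [hC, Real.sin_sub] at ih1
    linear_combination 2*Real.cos θ*ih2 - ih1

lemma cheb_at_one (k : ℕ) : cheb 1 k = (k+1 : ℕ) := by
  induction k using Nat.twoStepInduction with
  | zero => norm_num [cheb]
  | one => norm_num [cheb]
  | more k ih1 ih2 => rw [cheb_rec, ih1, ih2]; push_cast; ring

lemma cheb_neg (x : ℝ) (k : ℕ) : cheb (-x) k = (-1)^k * cheb x k := by
  induction k using Nat.twoStepInduction with
  | zero => simp [cheb]
  | one => simp [cheb]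
  | more k ih1 ih2 => rw [cheb_rec, cheb_rec, ih1, ih2]; ring

lemma cheb_pos_lt (x : ℝ) (hx : 1 ≤ x) (k : ℕ) :
    0 < cheb x k ∧ cheb x k < cheb x (k+1) := by
  induction k using Nat.twoStepInduction with
  | zero =>
    refine ⟨by norm_num [cheb], ?_⟩
    show (1:ℝ) < 2*x
    nlinarith
  | one =>
    refine ⟨by show (0:ℝ) < 2*x; nlinarith, ?_⟩
    show (2:ℝ)*x < 2*x*(2*x) - 1
    nlinarith
  | more k ih1 ih2 =>
    obtain ⟨p1, l1⟩ := ih1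
    obtain ⟨p2, l2⟩ := ih2
    constructor
    · rw [cheb_rec]; nlinarith
    · have l2' : cheb x (k+1) < 2*x*cheb x (k+1) - cheb x k := by
        rw [show k+1+1 = k+2 from rfl, cheb_rec] at l2; exact l2
      show cheb x (k+2) < cheb x ((k+1)+2)
      have e : cheb x (k+1+1) = 2*x*cheb x (k+1) - cheb x k := by
        rw [show k+1+1 = k+2 from rfl, cheb_rec]
      rw [cheb_rec, cheb_rec, e]
      nlinarith [mul_nonneg (by linarith : (0:ℝ) ≤ x - 1) (le_of_lt (lt_trans p2 l2'))]

lemma cheb_strictMono (x : ℝ) (hx : 1 ≤ x) : StrictMono (cheb x) :=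
  strictMono_nat_of_lt_succ (fun k => (cheb_pos_lt x hx k).2)

lemma signs_ne (a b : ℝ) (hb : 0 < b) (hba : b < a) (p q : ℕ) :
    (-1:ℝ)^p * a + (-1)^q * b ≠ 0 := by
  intro h
  have h1 : (-1:ℝ)^p * a = -((-1)^q * b) := by linarith
  have h2 := congrArg abs h1
  rw [abs_neg, abs_mul, abs_mul, abs_pow, abs_pow, abs_neg, abs_one, one_pow, one_pow,
    one_mul, one_mul, abs_of_pos (lt_trans hb hba), abs_of_pos hb] at h2
  linarith

lemma root_char (n m : ℕ) (hn : 1 ≤ n) (hm : 1 ≤ m) (μ : ℝ) :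
    cheb μ (n+m) + cheb μ (n-1) = 0 ↔
      μ ∈ ((fun k : ℕ => Real.cos (2 * π * k / (2 * n + m + 1))) ''
          (Set.Icc 1 (n + m / 2))
        ∪ (fun k : ℕ => Real.cos (π * (2 * k - 1 : ℕ) / (m + 1))) ''
            (Set.Icc 1 ((m + 1) / 2))) := by
  have hπ := Real.pi_pos
  have hd1 : (0:ℝ) < 2 * n + m + 1 := by positivity
  have hd2 : (0:ℝ) < (m:ℝ) + 1 := by positivity
  constructor
  · intro h
    -- μ ∈ [-1, 1]
    have h1 : μ ≤ 1 := by
      by_contra hc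
      push_neg at hc
      have hA := (cheb_pos_lt μ (le_of_lt hc) (n+m)).1
      have hB := (cheb_pos_lt μ (le_of_lt hc) (n-1)).1
      linarith
    have h2 : -1 ≤ μ := by
      by_contra hc
      push_neg at hc
      have hx : (1:ℝ) ≤ -μ := by linarith
      have hA := (cheb_pos_lt (-μ) hx (n-1)).1
      have hlt : cheb (-μ) (n-1) < cheb (-μ) (n+m) := cheb_strictMono _ hx (by omega)
      have e1 := cheb_neg (-μ) (n+m)
      have e2 := cheb_neg (-μ) (n-1)
      rw [neg_neg] at e1 e2
      rw [e1, e2] at h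
      exact signs_ne _ _ hA hlt (n+m) (n-1) h
    have hne1 : μ ≠ 1 := by
      intro e
      rw [e, cheb_at_one, cheb_at_one] at h
      have c1 : (0:ℝ) < ((n+m+1 : ℕ):ℝ) := by positivity
      have c2 : (0:ℝ) ≤ ((n-1+1 : ℕ):ℝ) := Nat.cast_nonneg _
      linarith
    have hnen1 : μ ≠ -1 := by
      intro e
      have e1 := cheb_neg 1 (n+m)
      have e2 := cheb_neg 1 (n-1)
      rw [cheb_at_one] at e1
      rw [cheb_at_one] at e2
      rw [e, show (-1:ℝ) = -(1:ℝ) from by norm_num, e1, e2] at h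
      have hba : ((n-1+1 : ℕ):ℝ) < ((n+m+1:ℕ):ℝ) := by
        have : n-1+1 < n+m+1 := by omega
        exact_mod_cast this
      have hb : (0:ℝ) < ((n-1+1 : ℕ):ℝ) := by positivity
      exact signs_ne _ _ hb hba _ _ h
    set θ := Real.arccos μ with hθdef
    have hcos : Real.cos θ = μ := Real.cos_arccos h2 h1
    have hθ0 : 0 < θ := by
      rcases lt_or_eq_of_le (Real.arccos_nonneg μ) with h' | h'
      · exact h'
      · exfalso; apply hne1; rw [← hcos, hθdef, ← h', Real.cos_zero]
    have hθπ : θ < π := by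
      rcases lt_or_eq_of_le (Real.arccos_le_pi μ) with h' | h'
      · exact h'
      · exfalso; apply hnen1; rw [← hcos, hθdef, h', Real.cos_pi]
    have hsin : 0 < Real.sin θ := Real.sin_pos_of_pos_of_lt_pi hθ0 hθπ
    rw [← hcos] at h
    have K : Real.sin (((n+m+1:ℕ):ℝ)*θ) + Real.sin (((n-1+1:ℕ):ℝ)*θ) = 0 := by
      have := congrArg (· * Real.sin θ) h
      simp only [add_mul, zero_mul] at this
      rw [cheb_mul_sin, cheb_mul_sin] at this
      exact this
    have hprod : Real.sin ((2*(n:ℝ)+m+1)*θ/2) * Real.cos (((m:ℝ)+1)*θ/2) = 0 := by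
      have ha : ((n+m+1:ℕ):ℝ)*θ = (2*(n:ℝ)+m+1)*θ/2 + ((m:ℝ)+1)*θ/2 := by
        push_cast; ring
      have hb : ((n-1+1:ℕ):ℝ)*θ = (2*(n:ℝ)+m+1)*θ/2 - ((m:ℝ)+1)*θ/2 := by
        have : n-1+1 = n := by omega
        rw [this]; push_cast; ring
      rw [ha, hb, Real.sin_add, Real.sin_sub] at K
      nlinarith [K]
    rcases mul_eq_zero.1 hprod with hf | hf
    · -- first family
      rw [Real.sin_eq_zero_iff] at hf
      obtain ⟨j, hj⟩ := hf
      have hθval : θ = 2*(j:ℝ)*π/(2*n+m+1) := by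
        field_simp at hj ⊢
        linarith
      have hjpos : 0 < j := by
        by_contra hc
        push_neg at hc
        have : (j:ℝ) ≤ 0 := by exact_mod_cast hc
        have : θ ≤ 0 := by
          rw [hθval]
          apply div_nonpos_of_nonpos_of_nonneg
          · nlinarith
          · linarith
        linarith
      have hjub : 2*j ≤ 2*(n:ℤ) + m := by
        have : 2*(j:ℝ)*π/(2*n+m+1) < π := by rw [← hθval]; exact hθπ
        rw [div_lt_iff₀ hd1] at this
        have h2j : (2*(j:ℝ)) < 2*n+m+1 := by nlinarith
        have : (2*j : ℤ) < 2*n+m+1 := by exact_mod_cast h2j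
        omega
      refine Or.inl ⟨j.toNat, ?_, ?_⟩
      · simp only [Set.mem_Icc]; omega
      · have hjc : ((j.toNat : ℕ):ℝ) = (j:ℝ) := by
          exact_mod_cast Int.toNat_of_nonneg (le_of_lt hjpos)
        show Real.cos (2 * π * ((j.toNat : ℕ):ℝ) / (2 * (n:ℝ) + (m:ℝ) + 1)) = μ
        rw [hjc, ← hcos, hθval]
        ring_nf
    · -- second family
      rw [Real.cos_eq_zero_iff] at hf
      obtain ⟨j, hj⟩ := hf
      have hθval : θ = (2*(j:ℝ)+1)*π/(m+1) := by
        field_simp at hj ⊢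
        linarith
      have hjpos : 0 ≤ j := by
        by_contra hc
        push_neg at hc
        have hjr : (j:ℝ) ≤ -1 := by
          have : j ≤ -1 := by omega
          exact_mod_cast this
        have : θ ≤ 0 := by
          rw [hθval]
          apply div_nonpos_of_nonpos_of_nonneg
          · nlinarith
          · linarith
        linarith
      have hjub : 2*j + 1 ≤ (m:ℤ) := by
        have : (2*(j:ℝ)+1)*π/(m+1) < π := by rw [← hθval]; exact hθπ
        rw [div_lt_iff₀ hd2] at this
        have h2j : (2*(j:ℝ)+1) < m+1 := by nlinarith
        have : (2*j+1 : ℤ) < m+1 := by exact_mod_cast h2j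
        omega
      refine Or.inr ⟨j.toNat + 1, ?_, ?_⟩
      · simp only [Set.mem_Icc]; omega
      · have hjc : ((2*(j.toNat+1) - 1 : ℕ):ℝ) = 2*(j:ℝ)+1 := by
          have h1 : (2*(j.toNat+1) - 1 : ℕ) = (2*j+1 : ℤ).toNat := by omega
          rw [h1]
          exact_mod_cast Int.toNat_of_nonneg (by omega : (0:ℤ) ≤ 2*j+1)
        show Real.cos (π * ((2*(j.toNat+1) - 1 : ℕ):ℝ) / ((m:ℝ)+1)) = μ
        rw [hjc, ← hcos, hθval]
        ring_nf
  · intro hμ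
    rcases hμ with ⟨k, hk, hkv⟩ | ⟨k, hk, hkv⟩
    · simp only [Set.mem_Icc] at hk
      set θ : ℝ := 2 * π * k / (2*n+m+1) with hθdef
      have hθ0 : 0 < θ := by
        apply div_pos _ hd1
        have : (0:ℝ) < (k:ℝ) := by exact_mod_cast hk.1
        positivity
      have hθπ : θ < π := by
        rw [hθdef, div_lt_iff₀ hd1]
        have h2k : (2*(k:ℝ)) ≤ 2*n+m := by
          have : 2*k ≤ 2*n+m := by omega
          exact_mod_cast this
        nlinarith
      have hsin : Real.sin θ ≠ 0 := ne_of_gt (Real.sin_pos_of_pos_of_lt_pi hθ0 hθπ)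
      rw [← hkv]
      have K : (cheb (Real.cos θ) (n+m) + cheb (Real.cos θ) (n-1)) * Real.sin θ = 0 := by
        rw [add_mul, cheb_mul_sin, cheb_mul_sin]
        have ha : ((n+m+1:ℕ):ℝ)*θ = (2*(n:ℝ)+m+1)*θ/2 + ((m:ℝ)+1)*θ/2 := by
          push_cast; ring
        have hb : ((n-1+1:ℕ):ℝ)*θ = (2*(n:ℝ)+m+1)*θ/2 - ((m:ℝ)+1)*θ/2 := by
          have : n-1+1 = n := by omega
          rw [this]; push_cast; ring
        rw [ha, hb, Real.sin_add, Real.sin_sub]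
        have hz : Real.sin ((2*(n:ℝ)+m+1)*θ/2) = 0 := by
          have : (2*(n:ℝ)+m+1)*θ/2 = (k:ℝ)*π := by
            rw [hθdef]; field_simp
          rw [this]
          exact_mod_cast Real.sin_nat_mul_pi k
        rw [hz]; ring
      rcases mul_eq_zero.1 K with h | h
      · exact h
      · exact absurd h hsin
    · simp only [Set.mem_Icc] at hk
      set θ : ℝ := π * (2*k-1 : ℕ) / (m+1) with hθdef
      have hcast : ((2*k-1 : ℕ):ℝ) = 2*(k:ℝ)-1 := by
        have : (2*k-1 : ℕ) = (2*k-1 : ℤ).toNat := by omega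
        rw [this]
        have h1 : ((2*(k:ℤ)-1).toNat : ℝ) = ((2*(k:ℤ)-1 : ℤ) : ℝ) := by
          exact_mod_cast Int.toNat_of_nonneg (by omega : (0:ℤ) ≤ 2*k-1)
        rw [h1]; push_cast; ring
      have hk1 : (1:ℝ) ≤ 2*(k:ℝ)-1 := by
        have : (1:ℝ) ≤ (k:ℝ) := by exact_mod_cast hk.1
        linarith
      have hkm : 2*(k:ℝ)-1 ≤ m := by
        have : 2*k - 1 ≤ m := by omega
        calc 2*(k:ℝ)-1 = ((2*k-1 : ℕ):ℝ) := hcast.symm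
          _ ≤ (m:ℝ) := by exact_mod_cast this
      have hθ0 : 0 < θ := by
        rw [hθdef, hcast]
        apply div_pos _ hd2
        nlinarith
      have hθπ : θ < π := by
        rw [hθdef, hcast, div_lt_iff₀ hd2]
        nlinarith
      have hsin : Real.sin θ ≠ 0 := ne_of_gt (Real.sin_pos_of_pos_of_lt_pi hθ0 hθπ)
      rw [← hkv]
      have K : (cheb (Real.cos θ) (n+m) + cheb (Real.cos θ) (n-1)) * Real.sin θ = 0 := by
        rw [add_mul, cheb_mul_sin, cheb_mul_sin]
        have ha : ((n+m+1:ℕ):ℝ)*θ = (2*(n:ℝ)+m+1)*θ/2 + ((m:ℝ)+1)*θ/2 := by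
          push_cast; ring
        have hb : ((n-1+1:ℕ):ℝ)*θ = (2*(n:ℝ)+m+1)*θ/2 - ((m:ℝ)+1)*θ/2 := by
          have : n-1+1 = n := by omega
          rw [this]; push_cast; ring
        rw [ha, hb, Real.sin_add, Real.sin_sub]
        have hz : Real.cos (((m:ℝ)+1)*θ/2) = 0 := by
          rw [Real.cos_eq_zero_iff]
          refine ⟨(k:ℤ) - 1, ?_⟩
          rw [hθdef, hcast]
          push_cast
          field_simp
          ring
        rw [hz]; ring
      rcases mul_eq_zero.1 K with h | h
      · exact h
      · exact absurd h hsin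


/-- The eigenvalues of the blossom matrix are exactly cos(2πk/(2n+m+1)) for
k = 1,…,n+⌊m/2⌋ together with cos(π(2k−1)/(m+1)) for k = 1,…,⌈m/2⌉. -/
theorem blossom_eigenvalues (n m : ℕ) (hn : 1 ≤ n) (hm : 1 ≤ m)
    (A : Matrix (Fin (n + m)) (Fin (n + m)) ℝ)
    (hA : ∀ v : Fin (n + m) → ℝ,
      (A.mulVec v ⟨0, by omega⟩ = v ⟨1, by omega⟩ / 2) ∧
      (∀ i : ℕ, ∀ _h1 : 0 < i, ∀ _h2 : i < n + m - 1,
        A.mulVec v ⟨i, by omega⟩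
          = (v ⟨i - 1, by omega⟩ + v ⟨i + 1, by omega⟩) / 2) ∧
      (A.mulVec v ⟨n + m - 1, by omega⟩
        = (v ⟨n + m - 2, by omega⟩ - v ⟨n - 1, by omega⟩) / 2)) :
    {μ : ℝ | ∃ v : Fin (n + m) → ℝ, v ≠ 0 ∧ A.mulVec v = μ • v}
      = (fun k : ℕ => Real.cos (2 * π * k / (2 * n + m + 1))) ''
          (Set.Icc 1 (n + m / 2))
        ∪ (fun k : ℕ => Real.cos (π * (2 * k - 1 : ℕ) / (m + 1))) ''
            (Set.Icc 1 ((m + 1) / 2)) := by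
  have hNM : 2 ≤ n + m := by omega
  ext μ
  simp only [Set.mem_setOf_eq]
  rw [← root_char n m hn hm μ]
  constructor
  · rintro ⟨v, hv, hAv⟩
    obtain ⟨r0, rint, rlast⟩ := hA v
    have hμv : ∀ j : Fin (n+m), A.mulVec v j = μ * v j := by
      intro j; rw [hAv]; rfl
    have key : ∀ i : ℕ, ∀ h : i < n + m,
        v ⟨i, h⟩ = v ⟨0, by omega⟩ * cheb μ i := by
      intro i
      induction i using Nat.twoStepInduction with
      | zero => intro h; simp [cheb]
      | one =>
        intro h
        have h0 := r0
        rw [hμv] at h0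
        show v ⟨1, h⟩ = v ⟨0, by omega⟩ * (2*μ)
        linarith [h0]
      | more i ih1 ih2 =>
        intro h
        have hr := rint (i+1) (by omega) (by omega)
        rw [hμv] at hr
        have e1 : v ⟨i+1-1, by omega⟩ = v ⟨0, by omega⟩ * cheb μ i := ih1 (by omega)
        have e2 : v ⟨i+1, by omega⟩ = v ⟨0, by omega⟩ * cheb μ (i+1) := ih2 (by omega)
        rw [e1, e2] at hr
        show v ⟨i+2, h⟩ = v ⟨0, by omega⟩ * (2*μ*cheb μ (i+1) - cheb μ i)
        have e3 : v ⟨i+1+1, by omega⟩ = v ⟨i+2, h⟩ := rfl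
        rw [e3] at hr
        linarith [hr]
    have v0ne : v ⟨0, by omega⟩ ≠ 0 := by
      intro h0
      apply hv
      funext j
      have hj := key j.1 j.2
      rw [h0, zero_mul] at hj
      exact hj
    have hr := rlast
    rw [hμv] at hr
    rw [key (n+m-1) (by omega), key (n+m-2) (by omega), key (n-1) (by omega)] at hr
    have hrec : cheb μ (n+m) = 2*μ*cheb μ (n+m-1) - cheb μ (n+m-2) := by
      obtain ⟨k, hk⟩ : ∃ k, n+m = k+2 := ⟨n+m-2, by omega⟩
      rw [hk, show k+2-1 = k+1 from by omega, show k+2-2 = k from by omega, cheb_rec]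
    have hz : v ⟨0, by omega⟩ * (cheb μ (n+m) + cheb μ (n-1)) = 0 := by
      rw [hrec]; linear_combination 2*hr
    rcases mul_eq_zero.1 hz with h' | h'
    · exact absurd h' v0ne
    · exact h'
  · intro hroot
    refine ⟨fun j => cheb μ j.1, ?_, ?_⟩
    · intro h0
      have h1 := congrFun h0 ⟨0, by omega⟩
      simp [cheb] at h1
    · obtain ⟨r0, rint, rlast⟩ := hA (fun j => cheb μ j.1)
      funext j
      show A.mulVec (fun j => cheb μ j.1) j = μ * cheb μ j.1
      by_cases hj0 : j.1 = 0
      · have hje : j = ⟨0, by omega⟩ := Fin.ext hj0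
        rw [hje, r0]
        show 2*μ / 2 = μ * 1
        ring
      · by_cases hjl : j.1 = n+m-1
        · have hje : j = ⟨n+m-1, by omega⟩ := Fin.ext hjl
          rw [hje, rlast]
          show (cheb μ (n+m-2) - cheb μ (n-1)) / 2 = μ * cheb μ (n+m-1)
          have hrec : cheb μ (n+m) = 2*μ*cheb μ (n+m-1) - cheb μ (n+m-2) := by
            obtain ⟨k, hk⟩ : ∃ k, n+m = k+2 := ⟨n+m-2, by omega⟩
            rw [hk, show k+2-1 = k+1 from by omega, show k+2-2 = k from by omega,
              cheb_rec]
          linarith [hroot, hrec]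
        · have h1 : 0 < j.1 := by omega
          have h2 : j.1 < n+m-1 := by omega
          have hint : A.mulVec (fun j => cheb μ j.1) j
              = (cheb μ (j.1-1) + cheb μ (j.1+1)) / 2 := rint j.1 h1 h2
          rw [hint]
          obtain ⟨i, hi⟩ : ∃ i, j.1 = i+1 := ⟨j.1-1, by omega⟩
          rw [hi]
          show (cheb μ i + cheb μ (i+2)) / 2 = μ * cheb μ (i+1)
          rw [cheb_rec]
          ring
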